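/- Let Γ be as in the model with sup bound |Γ(u)| ≤ C̄ for u in the relevant class, let χ(u) = (u'+y')/sqrt(1+(u'+y')^2) with |χ| < 1, and define h_α(w,θ) = -(Hξ + (A E_c / L_c)Γ(w + ℓ sin θ)) χ(w + ℓ sin θ) where 1 ≤ ξ(x) < ξ̄. Then pointwise, |h_α(w_1,θ_1) - h_α(w_2,θ_2)| ≤ (H ξ̄ + (A E_c / L_c) C̄)(|w_x| + ℓ|θ_x| + ℓ|θ_{2,x} θ|) + (A E_c / L_c) ∫_0^L (|w_x| + ℓ|θ_x| + ℓ|θ_{2,x} θ|) dx, where w = w_1 - w_2 and θ = θ_1 - θ_2, assuming both s ↦ s/sqrt(1+s^2) and s ↦ sqrt(1+s^2) are 1-Lipschitz and |(w_1+ℓ sin θ_1)' - (w_2+ℓ sin θ_2)'| ≤ |w_x| + ℓ|θ_x| + ℓ|θ_{2,x} θ|. -/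

import Mathlib

open Set intervalIntegral

/-!
Write `u = w + ℓ sin θ`, so that `h_α(w, θ) = -(Hξ + c Γ(u)) χ(u)` with `c = A E_c / L_c`, and
split the difference as
`h_α(w₁,θ₁) - h_α(w₂,θ₂) = -(Hξ + c Γ(u₁)) (χ(u₁) - χ(u₂)) - c (Γ(u₁) - Γ(u₂)) χ(u₂)`.
The first factor is bounded by `Hξ̄ + c C̄`; since `χ` and the integrand of `Γ` are
1-Lipschitz functions of `u' + y'`, both `|χ(u₁) - χ(u₂)|` and the integrand of
`Γ(u₁) - Γ(u₂)` are bounded by `|u₁' - u₂'| ≤ D`; finally `|χ(u₂)| ≤ 1`.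
-/

theorem abs_div_sqrt_one_add_sq_le_one (s : ℝ) : |s / √(1 + s ^ 2)| ≤ 1 := by
  have hpos : 0 < √(1 + s ^ 2) := Real.sqrt_pos.2 (by positivity)
  rw [abs_div, abs_of_pos hpos, div_le_one hpos, ← Real.sqrt_sq_eq_abs]
  exact Real.sqrt_le_sqrt (by linarith)

theorem LipschitzWith.abs_sub_add_right_le {φ : ℝ → ℝ} (hφ : LipschitzWith 1 φ)
    (a b c : ℝ) : |φ (a + c) - φ (b + c)| ≤ |a - b| := by
  simpa [Real.dist_eq] using hφ.dist_le_mul (a + c) (b + c)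

theorem abs_intervalIntegral_sub_le {f₁ f₂ D : ℝ → ℝ} {a b : ℝ} (hab : a ≤ b)
    (hf₁ : IntervalIntegrable f₁ MeasureTheory.volume a b)
    (hf₂ : IntervalIntegrable f₂ MeasureTheory.volume a b)
    (hD : IntervalIntegrable D MeasureTheory.volume a b)
    (h : ∀ t ∈ Ioo a b, |f₁ t - f₂ t| ≤ D t) :
    |(∫ t in a..b, f₁ t) - ∫ t in a..b, f₂ t| ≤ ∫ t in a..b, D t := by
  rw [← integral_sub hf₁ hf₂, ← Real.norm_eq_abs]
  refine norm_integral_le_of_norm_le hab ?_ hD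
  filter_upwards [MeasureTheory.volume.ae_ne b] with t htb ht
  exact h t ⟨ht.1, lt_of_le_of_ne ht.2 htb⟩

theorem abs_mul_sub_mul_le_of_coeff {a c Γ₁ Γ₂ χ₁ χ₂ M d I : ℝ} (hc : 0 ≤ c)
    (hM : |a + c * Γ₁| ≤ M) (hχ : |χ₁ - χ₂| ≤ d) (hΓ : |Γ₁ - Γ₂| ≤ I) (hχ₂ : |χ₂| ≤ 1) :
    |(a + c * Γ₁) * χ₁ - (a + c * Γ₂) * χ₂| ≤ M * d + c * I := by
  have hsplit : (a + c * Γ₁) * χ₁ - (a + c * Γ₂) * χ₂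
      = (a + c * Γ₁) * (χ₁ - χ₂) + c * ((Γ₁ - Γ₂) * χ₂) := by ring
  have hI : 0 ≤ I := (abs_nonneg _).trans hΓ
  rw [hsplit]
  calc _ ≤ |a + c * Γ₁| * |χ₁ - χ₂| + c * (|Γ₁ - Γ₂| * |χ₂|) := by
        simpa only [abs_mul, abs_of_nonneg hc] using
          abs_add_le ((a + c * Γ₁) * (χ₁ - χ₂)) (c * ((Γ₁ - Γ₂) * χ₂))
    _ ≤ M * d + c * (I * 1) := by
        gcongr
        · exact (abs_nonneg _).trans hM
    _ = M * d + c * I := by rw [mul_one]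

theorem abs_mul_add_mul_le {H ξ ξbar c Γ C : ℝ} (hH : 0 < H) (hξ : 1 ≤ ξ ∧ ξ < ξbar)
    (hc : 0 ≤ c) (hΓ : |Γ| ≤ C) : |H * ξ + c * Γ| ≤ H * ξbar + c * C :=
  calc _ ≤ |H * ξ| + |c * Γ| := abs_add_le _ _
    _ = H * ξ + c * |Γ| := by
      rw [abs_mul, abs_mul, abs_of_pos hH, abs_of_nonneg hc, abs_of_pos (by linarith)]
    _ ≤ H * ξbar + c * C := by gcongr; exact hξ.2.le

theorem intervalIntegrable_sqrt_one_add_sq_deriv_add_sub {u y : ℝ → ℝ} (hu : ContDiff ℝ 1 u)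
    (hy : ContDiff ℝ 1 y) (a b : ℝ) :
    IntervalIntegrable (fun t => √(1 + (deriv u t + deriv y t) ^ 2) - √(1 + deriv y t ^ 2))
      MeasureTheory.volume a b := by
  have := hu.continuous_deriv le_rfl; have := hy.continuous_deriv le_rfl
  exact Continuous.intervalIntegrable (by fun_prop) a b

theorem stmt_11_general (L ℓ H A Ec Lc ξbar Cbar : ℝ)
    (hL : 0 < L) (hH : 0 < H) (hA : 0 < A) (hEc : 0 < Ec)
    (hLc : 0 < Lc)
    (y ξ : ℝ → ℝ) (hy : ContDiff ℝ 1 y)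
    (hξ : ∀ x ∈ Ioo (0:ℝ) L, 1 ≤ ξ x ∧ ξ x < ξbar)
    (Γ : (ℝ → ℝ) → ℝ)
    (hΓ : ∀ u : ℝ → ℝ, Γ u = ∫ x in (0:ℝ)..L,
        (Real.sqrt (1 + (deriv u x + deriv y x)^2)
          - Real.sqrt (1 + (deriv y x)^2)))
    (χ : (ℝ → ℝ) → ℝ → ℝ)
    (hχ : ∀ (u : ℝ → ℝ) (x : ℝ), χ u x = (deriv u x + deriv y x) /
        Real.sqrt (1 + (deriv u x + deriv y x)^2))
    (hα : (ℝ → ℝ) → (ℝ → ℝ) → ℝ → ℝ)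
    (hhα : ∀ (w θ : ℝ → ℝ) (x : ℝ),
        hα w θ x = -(H * ξ x + (A * Ec / Lc) * Γ (fun t => w t + ℓ * Real.sin (θ t)))
          * χ (fun t => w t + ℓ * Real.sin (θ t)) x)
    (w1 w2 θ1 θ2 : ℝ → ℝ)
    (hw1 : ContDiff ℝ 1 w1) (hw2 : ContDiff ℝ 1 w2)
    (hθ1 : ContDiff ℝ 1 θ1) (hθ2 : ContDiff ℝ 1 θ2)
    (hΓbd1 : |Γ (fun t => w1 t + ℓ * Real.sin (θ1 t))| ≤ Cbar)
    (hχlip : LipschitzWith 1 (fun s : ℝ => s / Real.sqrt (1 + s^2)))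
    (hγlip : LipschitzWith 1 (fun s : ℝ => Real.sqrt (1 + s^2)))
    (D : ℝ → ℝ)
    (hD : ∀ x : ℝ, D x = |deriv w1 x - deriv w2 x| + ℓ * |deriv θ1 x - deriv θ2 x|
        + ℓ * |deriv θ2 x| * |θ1 x - θ2 x|)
    (hder : ∀ x ∈ Ioo (0:ℝ) L,
        |deriv (fun t => w1 t + ℓ * Real.sin (θ1 t)) x
          - deriv (fun t => w2 t + ℓ * Real.sin (θ2 t)) x| ≤ D x) :
    ∀ x ∈ Ioo (0:ℝ) L,
      |hα w1 θ1 x - hα w2 θ2 x|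
        ≤ (H * ξbar + (A * Ec / Lc) * Cbar) * D x
          + (A * Ec / Lc) * ∫ t in (0:ℝ)..L, D t := by
  intro x hx
  set u₁ : ℝ → ℝ := fun t => w1 t + ℓ * Real.sin (θ1 t)
  set u₂ : ℝ → ℝ := fun t => w2 t + ℓ * Real.sin (θ2 t)
  have hc : 0 ≤ A * Ec / Lc := by positivity
  have hD_integrable : IntervalIntegrable D MeasureTheory.volume 0 L := by
    have := hw1.continuous_deriv le_rfl; have := hw2.continuous_deriv le_rfl
    have := hθ1.continuous_deriv le_rfl; have := hθ2.continuous_deriv le_rfl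
    have := hθ1.continuous; have := hθ2.continuous
    rw [funext hD]
    exact Continuous.intervalIntegrable (by fun_prop) 0 L
  have hχ_diff : |χ u₁ x - χ u₂ x| ≤ D x := by
    rw [hχ, hχ]
    exact (hχlip.abs_sub_add_right_le _ _ _).trans (hder x hx)
  have hΓ_diff : |Γ u₁ - Γ u₂| ≤ ∫ t in (0:ℝ)..L, D t := by
    rw [hΓ, hΓ]
    refine abs_intervalIntegral_sub_le hL.le
      (intervalIntegrable_sqrt_one_add_sq_deriv_add_sub (by fun_prop) hy 0 L)
      (intervalIntegrable_sqrt_one_add_sq_deriv_add_sub (by fun_prop) hy 0 L)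
      hD_integrable fun t ht => ?_
    rw [sub_sub_sub_cancel_right]
    exact (hγlip.abs_sub_add_right_le _ _ _).trans (hder t ht)
  rw [hhα, hhα, neg_mul, neg_mul, neg_sub_neg, abs_sub_comm]
  exact abs_mul_sub_mul_le_of_coeff hc (abs_mul_add_mul_le hH (hξ x hx) hc hΓbd1)
    hχ_diff hΓ_diff (by rw [hχ]; exact abs_div_sqrt_one_add_sq_le_one _)

/-- Pointwise Lipschitz-type estimate for the nonlinear cable restoring force
`h_α(w,θ) = -(Hξ + (AE_c/L_c)Γ(w+ℓ sin θ)) χ(w+ℓ sin θ)`. -/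
theorem stmt_11 (L ℓ H A Ec Lc ξbar Cbar : ℝ)
    (hL : 0 < L) (hℓ : 0 < ℓ) (hH : 0 < H) (hA : 0 < A) (hEc : 0 < Ec)
    (hLc : 0 < Lc) (hξbar : 0 < ξbar) (hCbar : 0 < Cbar)
    (y ξ : ℝ → ℝ) (hy : ContDiff ℝ 1 y)
    (hξ : ∀ x ∈ Ioo (0:ℝ) L, 1 ≤ ξ x ∧ ξ x < ξbar)
    (Γ : (ℝ → ℝ) → ℝ)
    (hΓ : ∀ u : ℝ → ℝ, Γ u = ∫ x in (0:ℝ)..L,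
        (Real.sqrt (1 + (deriv u x + deriv y x)^2)
          - Real.sqrt (1 + (deriv y x)^2)))
    (χ : (ℝ → ℝ) → ℝ → ℝ)
    (hχ : ∀ (u : ℝ → ℝ) (x : ℝ), χ u x = (deriv u x + deriv y x) /
        Real.sqrt (1 + (deriv u x + deriv y x)^2))
    (hα : (ℝ → ℝ) → (ℝ → ℝ) → ℝ → ℝ)
    (hhα : ∀ (w θ : ℝ → ℝ) (x : ℝ),
        hα w θ x = -(H * ξ x + (A * Ec / Lc) * Γ (fun t => w t + ℓ * Real.sin (θ t)))
          * χ (fun t => w t + ℓ * Real.sin (θ t)) x)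
    (w1 w2 θ1 θ2 : ℝ → ℝ)
    (hw1 : ContDiff ℝ 1 w1) (hw2 : ContDiff ℝ 1 w2)
    (hθ1 : ContDiff ℝ 1 θ1) (hθ2 : ContDiff ℝ 1 θ2)
    (hΓbd1 : |Γ (fun t => w1 t + ℓ * Real.sin (θ1 t))| ≤ Cbar)
    (hΓbd2 : |Γ (fun t => w2 t + ℓ * Real.sin (θ2 t))| ≤ Cbar)
    (hχlip : LipschitzWith 1 (fun s : ℝ => s / Real.sqrt (1 + s^2)))
    (hγlip : LipschitzWith 1 (fun s : ℝ => Real.sqrt (1 + s^2)))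
    (D : ℝ → ℝ)
    (hD : ∀ x : ℝ, D x = |deriv w1 x - deriv w2 x| + ℓ * |deriv θ1 x - deriv θ2 x|
        + ℓ * |deriv θ2 x| * |θ1 x - θ2 x|)
    (hder : ∀ x ∈ Ioo (0:ℝ) L,
        |deriv (fun t => w1 t + ℓ * Real.sin (θ1 t)) x
          - deriv (fun t => w2 t + ℓ * Real.sin (θ2 t)) x| ≤ D x) :
    ∀ x ∈ Ioo (0:ℝ) L,
      |hα w1 θ1 x - hα w2 θ2 x|
        ≤ (H * ξbar + (A * Ec / Lc) * Cbar) * D x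
          + (A * Ec / Lc) * ∫ t in (0:ℝ)..L, D t :=
  stmt_11_general L ℓ H A Ec Lc ξbar Cbar hL hH hA hEc hLc y ξ hy hξ Γ hΓ χ hχ hα hhα w1 w2 θ1 θ2
    hw1 hw2 hθ1 hθ2 hΓbd1 hχlip hγlip D hD hder
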